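/- Block game to delay game reduction (one direction): For f : ℕ → ℕ₊ define f' by f'(0) = f(0) + f(1) and f'(i) = f(i+1) for i > 0. If Player I has a winning strategy in the delay game Γ_{f'}(L), then Player I has a winning strategy in the block game Γ'_f(L). -/

import Mathlib

/-- `Ssum f i = f 0 + ⋯ + f (i-1)`. -/
def Ssum (f : ℕ → ℕ) (i : ℕ) : ℕ := ∑ k ∈ Finset.range i, f k

/-- Player O has a winning strategy in the delay game `Γ_f(L)`. -/
def OWinsDelay (L : Set (ℕ → Bool × Bool)) (f : ℕ → ℕ) : Prop :=
  ∃ σ : ℕ → (ℕ → Bool) → Bool,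
    (∀ i : ℕ, ∀ α β : ℕ → Bool, (∀ j < Ssum f (i + 1), α j = β j) → σ i α = σ i β) ∧
    ∀ α : ℕ → Bool, (fun i => (α i, σ i α)) ∈ L

/-- Player I has a winning strategy in the delay game `Γ_f(L)`: a causal map from
Player O's bits to Player I's bits such that no resulting play lies in `L`. -/
def IWinsDelay (L : Set (ℕ → Bool × Bool)) (f : ℕ → ℕ) : Prop :=
  ∃ τ : (ℕ → Bool) → (ℕ → Bool),
    (∀ β β' : ℕ → Bool, ∀ i p : ℕ, Ssum f i ≤ p → p < Ssum f (i + 1) →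
      (∀ j < i, β j = β' j) → τ β p = τ β' p) ∧
    ∀ β : ℕ → Bool, (fun n => (τ β n, β n)) ∉ L

/-- Infinite concatenation of a sequence of (nonempty) finite blocks. -/
def flatSeq (w : ℕ → List Bool) : ℕ → Bool :=
  fun n => (((List.range (n + 1)).map w).flatten.getD n false)

/-- The sequence of Player I's blocks in the block game, given his first block `u0`,
his strategy `τ` (mapping Player O's previous blocks `v 0, …, v (i-1)` to the block
`u (i+1)`), and Player O's blocks `v`. -/
def blockU (u0 : List Bool) (τ : List (List Bool) → List Bool)
    (v : ℕ → List Bool) : ℕ → List Bool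
  | 0 => u0
  | i + 1 => τ (List.ofFn fun j : Fin i => v j)

/-- Player I has a winning strategy in the block game `Γ'_f(L)`: he first plays
`u 0` and `u 1`, and after Player O's block `v (i-1)` he plays `u (i+1)`; his blocks
have lengths in `[f i, 2 f i]` and for all responses of Player O with matching
lengths the resulting play is not in `L`. -/
def IWinsBlock (L : Set (ℕ → Bool × Bool)) (f : ℕ → ℕ) : Prop :=
  ∃ u0 : List Bool, ∃ τ : List (List Bool) → List Bool,
    ∀ v : ℕ → List Bool,
      (∀ i, (v i).length = (blockU u0 τ v i).length) →
        ((∀ i, f i ≤ (blockU u0 τ v i).length ∧ (blockU u0 τ v i).length ≤ 2 * f i) ∧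
         (fun n => (flatSeq (blockU u0 τ v) n, flatSeq v n)) ∉ L)

/-- Player O has a winning strategy in the block game `Γ'_f(L)`: a map `σ` producing
the block `v i` from Player I's blocks `u 0, …, u (i+1)`, with `|v i| = |u i|`, such
that against every sequence of Player I blocks with lengths in `[f i, 2 f i]` the
resulting play is in `L`. -/
def OWinsBlock (L : Set (ℕ → Bool × Bool)) (f : ℕ → ℕ) : Prop :=
  ∃ σ : List (List Bool) → List Bool,
    ∀ u : ℕ → List Bool,
      (∀ i, f i ≤ (u i).length ∧ (u i).length ≤ 2 * f i) →
        ((∀ i, (σ (List.ofFn fun j : Fin (i + 2) => u j)).length = (u i).length) ∧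
         (fun n => (flatSeq u n,
            flatSeq (fun i => σ (List.ofFn fun j : Fin (i + 2) => u j)) n)) ∈ L)

/-! Player I copies a winning strategy `τ` of `Γ_{f'}(L)` block by block. As
`Ssum f (i + 2) = Ssum f' (i + 1)`, the block `u (i + 1)` lies within the first `i + 1`
blocks of `Γ_{f'}`, which `τ` fixes once Player O's first `i` bits are known; since all
blocks are nonempty, those bits are already in Player O's blocks `v 0, …, v (i - 1)`. So the
play of the block game is a play of `Γ_{f'}` consistent with `τ`, hence not in `L`. -/

lemma Ssum_succ (f : ℕ → ℕ) (i : ℕ) : Ssum f (i + 1) = Ssum f i + f i :=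
  Finset.sum_range_succ f i

lemma le_Ssum {f : ℕ → ℕ} (hf : ∀ i, 1 ≤ f i) (m : ℕ) : m ≤ Ssum f m := by
  simpa [Ssum] using Finset.card_nsmul_le_sum (Finset.range m) f 1 fun i _ => hf i

lemma exists_eq_Ssum_add {f : ℕ → ℕ} (hf : ∀ i, 1 ≤ f i) (n : ℕ) :
    ∃ i r, r < f i ∧ n = Ssum f i + r := by
  induction n with
  | zero => exact ⟨0, 0, hf 0, rfl⟩
  | succ n ih =>
    obtain ⟨i, r, hr, rfl⟩ := ih
    by_cases hc : r + 1 < f i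
    · exact ⟨i, r + 1, hc, by omega⟩
    · exact ⟨i + 1, 0, hf _, by rw [Ssum_succ]; omega⟩

/-- The paper's `f'`. -/
def mergeFirstTwo (f : ℕ → ℕ) : ℕ → ℕ
  | 0 => f 0 + f 1
  | j + 1 => f (j + 2)

lemma Ssum_mergeFirstTwo_succ (f : ℕ → ℕ) (i : ℕ) :
    Ssum (mergeFirstTwo f) (i + 1) = Ssum f (i + 2) := by
  induction i with
  | zero => simp [Ssum, mergeFirstTwo, Finset.sum_range_succ]
  | succ i ih => rw [Ssum_succ, ih, Ssum_succ f (i + 2), mergeFirstTwo]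

lemma List.ofFn_eq_map_range {α : Type*} (v : ℕ → α) (i : ℕ) :
    (List.ofFn fun j : Fin i => v j) = (List.range i).map v := by
  apply List.ext_getElem <;> simp

lemma length_flatten_map_range (w : ℕ → List Bool) (m : ℕ) :
    ((List.range m).map w).flatten.length = Ssum (fun i => (w i).length) m := by
  induction m with
  | zero => rfl
  | succ m ih => simp [List.range_succ, Ssum_succ, ih]

lemma flatSeq_eq_getD_flatten {w : ℕ → List Bool} (hw : ∀ i, 1 ≤ (w i).length) {m n : ℕ}
    (hn : n < ((List.range m).map w).flatten.length) :
    flatSeq w n = ((List.range m).map w).flatten.getD n false := by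
  have getD_of_le : ∀ {m m'}, m ≤ m' → n < ((List.range m).map w).flatten.length →
      ((List.range m').map w).flatten.getD n false
        = ((List.range m).map w).flatten.getD n false := by
    intro m m' hm hn
    obtain ⟨k, rfl⟩ := Nat.exists_eq_add_of_le hm
    rw [List.range_add, List.map_append, List.flatten_append, List.getD_append _ _ _ _ hn]
  have hn' : n < ((List.range (n + 1)).map w).flatten.length := by
    rw [length_flatten_map_range]
    exact Nat.lt_of_lt_of_le n.lt_succ_self (le_Ssum hw _)
  rw [flatSeq, ← getD_of_le (le_max_right m (n + 1)) hn', getD_of_le (le_max_left m _) hn]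

lemma flatSeq_eq_of_getD {w : ℕ → List Bool} {f : ℕ → ℕ} {a : ℕ → Bool} (hf : ∀ i, 1 ≤ f i)
    (hlen : ∀ i, (w i).length = f i)
    (hw : ∀ i, ∀ k < f i, (w i).getD k false = a (Ssum f i + k)) :
    flatSeq w = a := by
  have hflat : ∀ m, ((List.range m).map w).flatten.length = Ssum f m := fun m => by
    rw [length_flatten_map_range]; simp only [hlen]
  funext n
  obtain ⟨i, k, hk, rfl⟩ := exists_eq_Ssum_add hf n
  have hn : Ssum f i + k < ((List.range (i + 1)).map w).flatten.length := by
    rw [hflat, Ssum_succ]; omega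
  rw [flatSeq_eq_getD_flatten (fun i => hlen i ▸ hf i) hn, List.range_succ, List.map_append,
    List.flatten_append, List.getD_append_right _ _ _ _ (hflat i ▸ Nat.le_add_right _ _)]
  simpa [hflat] using hw i k hk

def blockOf (a : ℕ → Bool) (f : ℕ → ℕ) (i : ℕ) : List Bool :=
  List.ofFn fun k : Fin (f i) => a (Ssum f i + k)

@[simp] lemma length_blockOf (a : ℕ → Bool) (f : ℕ → ℕ) (i : ℕ) :
    (blockOf a f i).length = f i :=
  List.length_ofFn

lemma getD_blockOf (a : ℕ → Bool) (f : ℕ → ℕ) {i k : ℕ} (hk : k < f i) :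
    (blockOf a f i).getD k false = a (Ssum f i + k) := by
  rw [blockOf, List.getD_eq_getElem _ _ (by simpa using hk)]
  simp

def DelayCausal (g : ℕ → ℕ) (τ : (ℕ → Bool) → ℕ → Bool) : Prop :=
  ∀ β β' : ℕ → Bool, ∀ i p : ℕ, Ssum g i ≤ p → p < Ssum g (i + 1) →
    (∀ j < i, β j = β' j) → τ β p = τ β' p

lemma DelayCausal.eq_of_lt_Ssum_succ {g : ℕ → ℕ} {τ : (ℕ → Bool) → ℕ → Bool}
    (hτ : DelayCausal g τ) {β β' : ℕ → Bool} {i p : ℕ} (hp : p < Ssum g (i + 1))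
    (hβ : ∀ j < i, β j = β' j) : τ β p = τ β' p := by
  classical
  have hex : ∃ k, p < Ssum g (k + 1) := ⟨i, hp⟩
  have hki : Nat.find hex ≤ i := Nat.find_min' hex hp
  refine hτ β β' _ p ?_ (Nat.find_spec hex) fun j hj => hβ j (by omega)
  rcases h : Nat.find hex with _ | k
  · exact Nat.zero_le p
  · exact not_lt.1 (Nat.find_min hex (h ▸ k.lt_succ_self))

def blockStrategyOfDelay (τ : (ℕ → Bool) → ℕ → Bool) (f : ℕ → ℕ) :
    List (List Bool) → List Bool :=
  fun l => blockOf (τ fun n => l.flatten.getD n false) f (l.length + 1)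

section blockStrategyOfDelay

variable {f : ℕ → ℕ} {τ : (ℕ → Bool) → ℕ → Bool} (v : ℕ → List Bool)

lemma length_blockU_blockStrategyOfDelay (a : ℕ → Bool) (i : ℕ) :
    (blockU (blockOf a f 0) (blockStrategyOfDelay τ f) v i).length = f i := by
  rcases i with _ | i <;> simp [blockU, blockStrategyOfDelay]

lemma flatSeq_blockU_blockStrategyOfDelay (hf : ∀ i, 1 ≤ f i)
    (hτ : DelayCausal (mergeFirstTwo f) τ) (hv : ∀ i, (v i).length = f i) :
    flatSeq (blockU (blockOf (τ fun _ => false) f 0) (blockStrategyOfDelay τ f) v)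
      = τ (flatSeq v) := by
  have hv1 : ∀ i, 1 ≤ (v i).length := fun i => hv i ▸ hf i
  refine flatSeq_eq_of_getD hf (length_blockU_blockStrategyOfDelay v _) fun i k hk => ?_
  rcases i with _ | i
  · change (blockOf _ f 0).getD k false = _
    rw [getD_blockOf _ _ hk]
    refine hτ.eq_of_lt_Ssum_succ (i := 0) ?_ (by simp)
    simp [Ssum, mergeFirstTwo] at hk ⊢
    omega
  · change (blockOf _ f (_ + 1)).getD k false = _
    rw [getD_blockOf _ _ (by simpa using hk), List.length_ofFn]
    refine hτ.eq_of_lt_Ssum_succ (i := i) ?_ fun j hj => ?_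
    · rw [Ssum_mergeFirstTwo_succ, Ssum_succ f (i + 1)]
      simpa using hk
    · have hj' : j < ((List.range i).map v).flatten.length :=
        (length_flatten_map_range v i).symm ▸ Nat.lt_of_lt_of_le hj (le_Ssum hv1 i)
      rw [List.ofFn_eq_map_range, flatSeq_eq_getD_flatten hv1 hj']

end blockStrategyOfDelay

/-- for `f : ℕ → ℕ₊` let `f'(0) = f 0 + f 1` and `f'(i) = f (i+1)` for
`i > 0`. If Player I wins the delay game `Γ_{f'}(L)` then Player I wins the block
game `Γ'_f(L)`. -/
theorem Iwins_delay_implies_Iwins_block (L : Set (ℕ → Bool × Bool))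
    (f : ℕ → ℕ) (hf : ∀ i, 1 ≤ f i)
    (h : IWinsDelay L (fun i => match i with
      | 0 => f 0 + f 1
      | j + 1 => f (j + 2))) :
    IWinsBlock L f := by
  obtain ⟨τ, hτc, hτw⟩ : ∃ τ, DelayCausal (mergeFirstTwo f) τ ∧
      ∀ β : ℕ → Bool, (fun n => (τ β n, β n)) ∉ L := h
  refine ⟨blockOf (τ fun _ => false) f 0, blockStrategyOfDelay τ f, fun v hv => ?_⟩
  have hlen := length_blockU_blockStrategyOfDelay (f := f) (τ := τ) v (τ fun _ => false)
  refine ⟨fun i => by rw [hlen]; omega, ?_⟩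
  rw [flatSeq_blockU_blockStrategyOfDelay v hf hτc fun i => (hv i).trans (hlen i)]
  exact hτw _
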